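/- arXiv:1903.01844 — 8 statements merged into one kernel-verified Lean document; each statement's English description precedes it below -/
import Mathlib

section
/- Let f : ℤ → ℝ with f(i) ≥ 0 for all i, let d, N be positive integers, and let (ℓ_m), (r_m) be integer sequences with -N ≤ ℓ_m, r_m ≤ N for all m. Then liminf_{n→∞} (Σ_{i∈[-n,n]} f(i))/(2n+1) = liminf_{m→∞} (Σ_{i∈[-md-ℓ_m, md+r_m]} f(i))/(2md + ℓ_m + r_m + 1). -/
open Filter

open scoped Classical in
noncomputable def lowerDensity (U : Set ℤ) : ℝ :=
  Filter.liminf (fun n : ℕ =>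
    (((Finset.Icc (-(n:ℤ)) (n:ℤ)).filter (fun m => m ∈ U)).card : ℝ) / (2*(n:ℝ)+1))
    Filter.atTop

/-- `D` is a dominating set of the Cayley digraph `Γ(ℤ, S)`. -/
def IsDominating (S D : Set ℤ) : Prop :=
  ∀ v : ℤ, v ∈ D ∨ ∃ u ∈ D, ∃ s ∈ S, v = u + s

/-- The domination ratio of `Γ(ℤ, S)`. -/
noncomputable def domRatio (S : Set ℤ) : ℝ :=
  sInf {x : ℝ | ∃ D : Set ℤ, IsDominating S D ∧ x = lowerDensity D}

/-- Two downward-approximating sets of reals containing 0 have the same sSup. -/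
lemma sSup_eq_sSup_aux {A B : Set ℝ} (hA0 : (0:ℝ) ∈ A) (hB0 : (0:ℝ) ∈ B)
    (hAB : ∀ c ∈ A, ∀ ε > (0:ℝ), c - ε ∈ B) (hBA : ∀ c ∈ B, ∀ ε > (0:ℝ), c - ε ∈ A) :
    sSup A = sSup B := by
  by_cases hA : BddAbove A
  · have hB : BddAbove B := by
      obtain ⟨M, hM⟩ := hA
      refine ⟨M + 1, fun b hb => ?_⟩
      have := hM (hBA b hb 1 one_pos)
      linarith [this]
    apply le_antisymm
    · refine csSup_le ⟨0, hA0⟩ fun c hc => ?_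
      exact le_of_forall_sub_le fun ε hε => le_csSup hB (hAB c hc ε hε)
    · refine csSup_le ⟨0, hB0⟩ fun c hc => ?_
      exact le_of_forall_sub_le fun ε hε => le_csSup hA (hBA c hc ε hε)
  · have hB : ¬ BddAbove B := by
      intro hB
      apply hA
      obtain ⟨M, hM⟩ := hB
      refine ⟨M + 1, fun a ha => ?_⟩
      have := hM (hAB a ha 1 one_pos)
      linarith [this]
    rw [Real.sSup_of_not_bddAbove hA, Real.sSup_of_not_bddAbove hB]

lemma key1 (f : ℤ → ℝ) (hf : ∀ i : ℤ, 0 ≤ f i) (d N : ℤ) (hd : 0 < d) (hN : 0 < N)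
    (l r : ℕ → ℤ) (hl : ∀ m, -N ≤ l m ∧ l m ≤ N) (hr : ∀ m, -N ≤ r m ∧ r m ≤ N)
    (c ε : ℝ) (hc : 0 ≤ c) (hε : 0 < ε)
    (h : ∀ᶠ n : ℕ in atTop, c ≤ (∑ i ∈ Finset.Icc (-(n:ℤ)) (n:ℤ), f i) / (2*(n:ℝ)+1)) :
    ∀ᶠ m : ℕ in atTop,
      c - ε ≤ (∑ i ∈ Finset.Icc (-(m:ℤ)*d - l m) ((m:ℤ)*d + r m), f i) /
        (2*(m:ℝ)*(d:ℝ) + (l m : ℝ) + (r m : ℝ) + 1) := by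
  obtain ⟨n0, hn0⟩ := eventually_atTop.mp h
  have hdR : (0:ℝ) < (d:ℝ) := by exact_mod_cast hd
  have hNR : (0:ℝ) < (N:ℝ) := by exact_mod_cast hN
  have hmd : Tendsto (fun m : ℕ => (m:ℝ)*(d:ℝ)) atTop atTop :=
    tendsto_natCast_atTop_atTop.atTop_mul_const hdR
  have h1 := hmd.eventually_ge_atTop ((N:ℝ) + (n0:ℝ) + 1)
  have h2 := hmd.eventually_ge_atTop ((4*(N:ℝ)*c/ε + 2*(N:ℝ)) / 2)
  filter_upwards [h1, h2] with m hm1 hm2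
  have hmdZ : (N:ℤ) + (n0:ℤ) + 1 ≤ (m:ℤ)*d := by exact_mod_cast hm1
  set k : ℕ := ((m:ℤ)*d - N).toNat with hkdef
  have hk : (k:ℤ) = (m:ℤ)*d - N := Int.toNat_of_nonneg (by
    have : (0:ℤ) ≤ (n0:ℤ) := Int.ofNat_nonneg n0
    linarith)
  have hkn0 : n0 ≤ k := by
    have : (n0:ℤ) ≤ (k:ℤ) := by
      have : (0:ℤ) ≤ (n0:ℤ) := Int.ofNat_nonneg n0
      omega
    exact_mod_cast this
  have hA := hn0 k hkn0
  have hden : (0:ℝ) < 2*(k:ℝ)+1 := by positivity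
  have hsumk : c * (2*(k:ℝ)+1) ≤ ∑ i ∈ Finset.Icc (-(k:ℤ)) (k:ℤ), f i :=
    (le_div_iff₀ hden).mp hA
  have hneg : -(m:ℤ)*d = -((m:ℤ)*d) := by ring
  have hsub : Finset.Icc (-(k:ℤ)) (k:ℤ) ⊆ Finset.Icc (-(m:ℤ)*d - l m) ((m:ℤ)*d + r m) := by
    apply Finset.Icc_subset_Icc
    · have := (hl m).1
      rw [hneg]
      omega
    · have := (hr m).1
      omega
  have hsum2 : ∑ i ∈ Finset.Icc (-(k:ℤ)) (k:ℤ), f i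
      ≤ ∑ i ∈ Finset.Icc (-(m:ℤ)*d - l m) ((m:ℤ)*d + r m), f i :=
    Finset.sum_le_sum_of_subset_of_nonneg hsub (fun i _ _ => hf i)
  have hkR : (k:ℝ) = (m:ℝ)*(d:ℝ) - (N:ℝ) := by exact_mod_cast hk
  have hlR : -(N:ℝ) ≤ (l m:ℝ) ∧ (l m:ℝ) ≤ (N:ℝ) := by exact_mod_cast hl m
  have hrR : -(N:ℝ) ≤ (r m:ℝ) ∧ (r m:ℝ) ≤ (N:ℝ) := by exact_mod_cast hr m
  have hn0R : (0:ℝ) ≤ (n0:ℝ) := Nat.cast_nonneg n0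
  have hDge : 2*((m:ℝ)*(d:ℝ)) - 2*(N:ℝ) + 1 ≤ 2*(m:ℝ)*(d:ℝ) + (l m : ℝ) + (r m : ℝ) + 1 := by
    linarith [hlR.1, hrR.1]
  have hDle : 2*(m:ℝ)*(d:ℝ) + (l m : ℝ) + (r m : ℝ) + 1 ≤ 2*((m:ℝ)*(d:ℝ)) + 2*(N:ℝ) + 1 := by
    nlinarith [hlR.2, hrR.2]
  have hDpos : (0:ℝ) < 2*(m:ℝ)*(d:ℝ) + (l m : ℝ) + (r m : ℝ) + 1 := by nlinarith
  have hC : 4*(N:ℝ)*c ≤ ε * (2*((m:ℝ)*(d:ℝ)) - 2*(N:ℝ) + 1) := by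
    have h3 : 4*(N:ℝ)*c/ε ≤ 2*((m:ℝ)*(d:ℝ)) - 2*(N:ℝ) + 1 := by linarith
    calc 4*(N:ℝ)*c = (4*(N:ℝ)*c/ε) * ε := by field_simp
    _ ≤ (2*((m:ℝ)*(d:ℝ)) - 2*(N:ℝ) + 1) * ε := mul_le_mul_of_nonneg_right h3 hε.le
    _ = ε * (2*((m:ℝ)*(d:ℝ)) - 2*(N:ℝ) + 1) := by ring
  rw [le_div_iff₀ hDpos]
  have hsumk' : c * (2*((m:ℝ)*(d:ℝ)) - 2*(N:ℝ) + 1) ≤ ∑ i ∈ Finset.Icc (-(k:ℤ)) (k:ℤ), f i := by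
    rw [hkR] at hsumk
    nlinarith [hsumk]
  have t1 := mul_le_mul_of_nonneg_left hDle hc
  have t2 := mul_le_mul_of_nonneg_left hDge hε.le
  have expand : (c - ε) * (2*(m:ℝ)*(d:ℝ) + (l m : ℝ) + (r m : ℝ) + 1)
      = c * (2*(m:ℝ)*(d:ℝ) + (l m : ℝ) + (r m : ℝ) + 1)
        - ε * (2*(m:ℝ)*(d:ℝ) + (l m : ℝ) + (r m : ℝ) + 1) := by ring
  have expand2 : c * (2*((m:ℝ)*(d:ℝ)) + 2*(N:ℝ) + 1)
      = c * (2*((m:ℝ)*(d:ℝ)) - 2*(N:ℝ) + 1) + 4*(N:ℝ)*c := by ring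
  linarith

lemma key2 (f : ℤ → ℝ) (hf : ∀ i : ℤ, 0 ≤ f i) (d N : ℤ) (hd : 0 < d) (hN : 0 < N)
    (l r : ℕ → ℤ) (hl : ∀ m, -N ≤ l m ∧ l m ≤ N) (hr : ∀ m, -N ≤ r m ∧ r m ≤ N)
    (c ε : ℝ) (hc : 0 ≤ c) (hε : 0 < ε)
    (h : ∀ᶠ m : ℕ in atTop,
      c ≤ (∑ i ∈ Finset.Icc (-(m:ℤ)*d - l m) ((m:ℤ)*d + r m), f i) /
        (2*(m:ℝ)*(d:ℝ) + (l m : ℝ) + (r m : ℝ) + 1)) :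
    ∀ᶠ n : ℕ in atTop,
      c - ε ≤ (∑ i ∈ Finset.Icc (-(n:ℤ)) (n:ℤ), f i) / (2*(n:ℝ)+1) := by
  obtain ⟨m0, hm0⟩ := eventually_atTop.mp h
  have hdR : (0:ℝ) < (d:ℝ) := by exact_mod_cast hd
  have hNR : (0:ℝ) < (N:ℝ) := by exact_mod_cast hN
  have h1 := tendsto_natCast_atTop_atTop.eventually_ge_atTop ((m0:ℝ)*(d:ℝ) + 2*(N:ℝ) + (d:ℝ))
  have h2 := tendsto_natCast_atTop_atTop.eventually_ge_atTop
    ((c*(4*(N:ℝ)+2*(d:ℝ)-2)/ε - 1)/2)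
  filter_upwards [h1, h2] with n hn1 hn2
  have hn1Z : (m0:ℤ)*d + 2*N + d ≤ (n:ℤ) := by exact_mod_cast hn1
  set q : ℤ := ((n:ℤ) - N) / d with hqdef
  have hq_ge : (m0:ℤ) ≤ q := by
    rw [hqdef]
    rw [Int.le_ediv_iff_mul_le hd]
    omega
  have hq0 : (0:ℤ) ≤ q := le_trans (Int.ofNat_nonneg m0) hq_ge
  set m : ℕ := q.toNat with hmdef
  have hmq : (m:ℤ) = q := Int.toNat_of_nonneg hq0
  have hm_ge : m0 ≤ m := by
    have : (m0:ℤ) ≤ (m:ℤ) := by rw [hmq]; exact hq_ge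
    exact_mod_cast this
  have hB := hm0 m hm_ge
  have heq := Int.mul_ediv_add_emod ((n:ℤ) - N) d
  have hmod0 : 0 ≤ ((n:ℤ) - N) % d := Int.emod_nonneg _ (ne_of_gt hd)
  have hmodd : ((n:ℤ) - N) % d < d := Int.emod_lt_of_pos _ hd
  have e1' : d * q ≤ (n:ℤ) - N := by rw [hqdef]; linarith
  have e2' : (n:ℤ) - N - d + 1 ≤ d * q := by rw [hqdef]; linarith
  have e1 : (m:ℤ)*d ≤ (n:ℤ) - N := by rw [hmq, mul_comm]; exact e1'
  have e2 : (n:ℤ) - N - d + 1 ≤ (m:ℤ)*d := by rw [hmq, mul_comm]; exact e2'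
  have e1R : (m:ℝ)*(d:ℝ) ≤ (n:ℝ) - (N:ℝ) := by exact_mod_cast e1
  have e2R : (n:ℝ) - (N:ℝ) - (d:ℝ) + 1 ≤ (m:ℝ)*(d:ℝ) := by exact_mod_cast e2
  have hlR : -(N:ℝ) ≤ (l m:ℝ) ∧ (l m:ℝ) ≤ (N:ℝ) := by exact_mod_cast hl m
  have hrR : -(N:ℝ) ≤ (r m:ℝ) ∧ (r m:ℝ) ≤ (N:ℝ) := by exact_mod_cast hr m
  have hDge : 2*(n:ℝ) - 4*(N:ℝ) - 2*(d:ℝ) + 3 ≤ 2*(m:ℝ)*(d:ℝ) + (l m : ℝ) + (r m : ℝ) + 1 := by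
    linarith [hlR.1, hrR.1]
  have hm0d : (0:ℝ) ≤ (m0:ℝ)*(d:ℝ) := by positivity
  have hDpos : (0:ℝ) < 2*(m:ℝ)*(d:ℝ) + (l m : ℝ) + (r m : ℝ) + 1 := by linarith
  have hsum : c * (2*(m:ℝ)*(d:ℝ) + (l m : ℝ) + (r m : ℝ) + 1)
      ≤ ∑ i ∈ Finset.Icc (-(m:ℤ)*d - l m) ((m:ℤ)*d + r m), f i :=
    (le_div_iff₀ hDpos).mp hB
  have hneg : -(m:ℤ)*d = -((m:ℤ)*d) := by ring
  have hsub : Finset.Icc (-(m:ℤ)*d - l m) ((m:ℤ)*d + r m) ⊆ Finset.Icc (-(n:ℤ)) (n:ℤ) := by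
    apply Finset.Icc_subset_Icc
    · have := (hl m).2
      rw [hneg]
      omega
    · have := (hr m).2
      omega
  have hsum2 : ∑ i ∈ Finset.Icc (-(m:ℤ)*d - l m) ((m:ℤ)*d + r m), f i
      ≤ ∑ i ∈ Finset.Icc (-(n:ℤ)) (n:ℤ), f i :=
    Finset.sum_le_sum_of_subset_of_nonneg hsub (fun i _ _ => hf i)
  have hden : (0:ℝ) < 2*(n:ℝ)+1 := by positivity
  have hC : c*(4*(N:ℝ)+2*(d:ℝ)-2) ≤ ε * (2*(n:ℝ)+1) := by
    have h3 : c*(4*(N:ℝ)+2*(d:ℝ)-2)/ε ≤ 2*(n:ℝ)+1 := by linarith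
    calc c*(4*(N:ℝ)+2*(d:ℝ)-2) = (c*(4*(N:ℝ)+2*(d:ℝ)-2)/ε) * ε := by field_simp
    _ ≤ (2*(n:ℝ)+1) * ε := mul_le_mul_of_nonneg_right h3 hε.le
    _ = ε * (2*(n:ℝ)+1) := by ring
  rw [le_div_iff₀ hden]
  have t1 := mul_le_mul_of_nonneg_left hDge hc
  have expand : (c - ε) * (2*(n:ℝ)+1) = c * (2*(n:ℝ)+1) - ε * (2*(n:ℝ)+1) := by ring
  have expand2 : c * (2*(n:ℝ)+1)
      = c * (2*(n:ℝ) - 4*(N:ℝ) - 2*(d:ℝ) + 3) + c*(4*(N:ℝ)+2*(d:ℝ)-2) := by ring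
  linarith

theorem stmt_4 (f : ℤ → ℝ) (hf : ∀ i : ℤ, 0 ≤ f i) (d N : ℤ) (hd : 0 < d) (hN : 0 < N)
    (l r : ℕ → ℤ) (hl : ∀ m, -N ≤ l m ∧ l m ≤ N) (hr : ∀ m, -N ≤ r m ∧ r m ≤ N) :
    Filter.liminf (fun n : ℕ =>
      (∑ i ∈ Finset.Icc (-(n:ℤ)) (n:ℤ), f i) / (2*(n:ℝ)+1)) Filter.atTop
    = Filter.liminf (fun m : ℕ =>
      (∑ i ∈ Finset.Icc (-(m:ℤ)*d - l m) ((m:ℤ)*d + r m), f i) /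
        (2*(m:ℝ)*(d:ℝ) + (l m : ℝ) + (r m : ℝ) + 1)) Filter.atTop := by
  have hdR : (0:ℝ) < (d:ℝ) := by exact_mod_cast hd
  have hNR : (0:ℝ) < (N:ℝ) := by exact_mod_cast hN
  have hApos : ∀ n : ℕ, (0:ℝ) ≤ (∑ i ∈ Finset.Icc (-(n:ℤ)) (n:ℤ), f i) / (2*(n:ℝ)+1) := by
    intro n
    have : (0:ℝ) < 2*(n:ℝ)+1 := by positivity
    exact div_nonneg (Finset.sum_nonneg fun i _ => hf i) this.le
  have hmd : Tendsto (fun m : ℕ => (m:ℝ)*(d:ℝ)) atTop atTop :=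
    tendsto_natCast_atTop_atTop.atTop_mul_const hdR
  have hBpos : ∀ᶠ m : ℕ in atTop, (0:ℝ) ≤
      (∑ i ∈ Finset.Icc (-(m:ℤ)*d - l m) ((m:ℤ)*d + r m), f i) /
        (2*(m:ℝ)*(d:ℝ) + (l m : ℝ) + (r m : ℝ) + 1) := by
    filter_upwards [hmd.eventually_ge_atTop ((N:ℝ) + 1)] with m hm
    have hlR : -(N:ℝ) ≤ (l m:ℝ) := by exact_mod_cast (hl m).1
    have hrR : -(N:ℝ) ≤ (r m:ℝ) := by exact_mod_cast (hr m).1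
    have hDpos : (0:ℝ) < 2*(m:ℝ)*(d:ℝ) + (l m : ℝ) + (r m : ℝ) + 1 := by linarith
    exact div_nonneg (Finset.sum_nonneg fun i _ => hf i) hDpos.le
  rw [Filter.liminf_eq, Filter.liminf_eq]
  apply sSup_eq_sSup_aux
  · exact Filter.Eventually.of_forall hApos
  · exact hBpos
  · intro c hc ε hε
    simp only [Set.mem_setOf_eq] at hc ⊢
    have hc' : ∀ᶠ n : ℕ in atTop, max c 0 ≤
        (∑ i ∈ Finset.Icc (-(n:ℤ)) (n:ℤ), f i) / (2*(n:ℝ)+1) :=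
      hc.mono fun n hn => max_le hn (hApos n)
    have := key1 f hf d N hd hN l r hl hr (max c 0) ε (le_max_right c 0) hε hc'
    exact this.mono fun m hm => le_trans (by linarith [le_max_left c 0]) hm
  · intro c hc ε hε
    simp only [Set.mem_setOf_eq] at hc ⊢
    have hc' : ∀ᶠ m : ℕ in atTop, max c 0 ≤
        (∑ i ∈ Finset.Icc (-(m:ℤ)*d - l m) ((m:ℤ)*d + r m), f i) /
          (2*(m:ℝ)*(d:ℝ) + (l m : ℝ) + (r m : ℝ) + 1) :=
      (hc.and hBpos).mono fun m hm => max_le hm.1 hm.2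
    have := key2 f hf d N hd hN l r hl hr (max c 0) ε (le_max_right c 0) hε hc'
    exact this.mono fun n hn => le_trans (by linarith [le_max_left c 0]) hn
end

section
/- Let S be a finite subset of ℤ \ {0}. If Γ(ℤ, S) has an efficient dominating set (a dominating set D such that every integer is dominated by exactly one element of D), then γ̄(ℤ, S) = 1/(|S|+1). -/
/-!
An element `u` dominates the `|S| + 1` integers of `u +ᵥ ({0} ∪ S)`, all within distance
`M = max |s|` of `u`. Counting in the window `[-n, n]`: if `D` dominates, the neighbourhoods of the
points of `D` in the window cover all of it except at most `2M` points near its ends, so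
`2n + 1 ≤ (|S| + 1) |D ∩ [-n, n]| + 2M`; if moreover the neighbourhoods are pairwise disjoint
(efficiency) they fit disjointly inside `[-n - M, n + M]`, so `(|S| + 1) |D ∩ [-n, n]| ≤ 2n + 1 + 2M`.
Dividing by `2n + 1`, every dominating set has lower density at least `1 / (|S| + 1)`, and an
efficient one has density exactly `1 / (|S| + 1)`.
-/

open Filter

open Finset Topology
open scoped Classical Pointwise

namespace IntDomination

def closedNbhd (S : Finset ℤ) (u : ℤ) : Finset ℤ := u +ᵥ insert 0 S

noncomputable def windowCount (D : Set ℤ) (n : ℕ) : ℕ := #{m ∈ Icc (-(n : ℤ)) n | m ∈ D}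

variable {S : Finset ℤ} {D : Set ℤ} {M : ℕ}

theorem mem_closedNbhd {u v : ℤ} : v ∈ closedNbhd S u ↔ u = v ∨ ∃ s ∈ S, v = u + s := by
  simp only [closedNbhd, mem_vadd_finset, mem_insert, vadd_eq_add]
  constructor
  · rintro ⟨t, rfl | ht, rfl⟩
    · simp
    · exact Or.inr ⟨t, ht, rfl⟩
  · rintro (rfl | ⟨s, hs, rfl⟩)
    · exact ⟨0, Or.inl rfl, add_zero u⟩
    · exact ⟨s, Or.inr hs, rfl⟩

theorem card_closedNbhd_le (u : ℤ) : #(closedNbhd S u) ≤ #S + 1 :=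
  (card_vadd_finset u _).trans_le (card_insert_le _ _)

theorem card_closedNbhd (hS : (0 : ℤ) ∉ S) (u : ℤ) : #(closedNbhd S u) = #S + 1 :=
  (card_vadd_finset u _).trans (card_insert_of_notMem hS)

theorem isDominating_iff : IsDominating ↑S D ↔ ∀ v, ∃ u ∈ D, v ∈ closedNbhd S u := by
  simp only [IsDominating, mem_closedNbhd, mem_coe]
  refine forall_congr' fun v => ⟨?_, ?_⟩
  · rintro (hv | ⟨u, hu, s, hs, rfl⟩)
    · exact ⟨v, hv, Or.inl rfl⟩
    · exact ⟨u, hu, Or.inr ⟨s, hs, rfl⟩⟩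
  · rintro ⟨u, hu, rfl | ⟨s, hs, rfl⟩⟩
    · exact Or.inl hu
    · exact Or.inr ⟨u, hu, s, hs, rfl⟩

theorem closedNbhd_subset_Icc (hM : ∀ s ∈ S, s.natAbs ≤ M) (u : ℤ) :
    closedNbhd S u ⊆ Icc (u - M) (u + M) := by
  intro v hv
  rw [mem_Icc]
  rcases mem_closedNbhd.1 hv with rfl | ⟨s, hs, rfl⟩
  · omega
  · have := hM s hs
    omega

theorem windowCount_le (D : Set ℤ) (n : ℕ) : windowCount D n ≤ 2 * n + 1 :=
  (card_filter_le _ _).trans (by simp only [Int.card_Icc]; omega)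

theorem windowCount_lower (hdom : IsDominating ↑S D) (hM : ∀ s ∈ S, s.natAbs ≤ M) (n : ℕ) :
    2 * n + 1 ≤ (#S + 1) * windowCount D n + 2 * M := by
  set A : Finset ℤ := {m ∈ Icc (-(n : ℤ)) n | m ∈ D}
  -- a point at distance at least `M` from the ends is dominated from inside the window
  have hcover : Icc (-(n : ℤ)) n ⊆
      A.biUnion (closedNbhd S) ∪ (Ico (-(n : ℤ)) (M - n) ∪ Ioc (n - M : ℤ) n) := by
    intro v hv
    rw [mem_Icc] at hv
    obtain ⟨u, hu, huv⟩ := isDominating_iff.1 hdom v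
    have hdist := mem_Icc.1 (closedNbhd_subset_Icc hM u huv)
    by_cases hmid : (M : ℤ) - n ≤ v ∧ v ≤ n - M
    · exact mem_union_left _ (mem_biUnion.2 ⟨u, mem_filter.2 ⟨mem_Icc.2 (by omega), hu⟩, huv⟩)
    · simp only [mem_union, mem_Ico, mem_Ioc]
      omega
  have hcard := (card_le_card hcover).trans
    ((card_union_le _ _).trans (add_le_add_right (card_union_le _ _) _))
  have hA : #(A.biUnion (closedNbhd S)) ≤ #A * (#S + 1) :=
    card_biUnion_le_card_mul _ _ _ fun u _ => card_closedNbhd_le u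
  simp only [Int.card_Icc, Int.card_Ico, Int.card_Ioc] at hcard
  rw [show windowCount D n = #A from rfl, mul_comm (#S + 1)]
  omega

theorem windowCount_upper (hS : (0 : ℤ) ∉ S) (hpack : D.PairwiseDisjoint (closedNbhd S))
    (hM : ∀ s ∈ S, s.natAbs ≤ M) (n : ℕ) :
    (#S + 1) * windowCount D n ≤ 2 * n + 1 + 2 * M := by
  set A : Finset ℤ := {m ∈ Icc (-(n : ℤ)) n | m ∈ D}
  have hdisj : (A : Set ℤ).PairwiseDisjoint (closedNbhd S) :=
    hpack.subset fun u hu => (mem_filter.1 hu).2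
  have hA : #(A.biUnion (closedNbhd S)) = #A * (#S + 1) := by
    rw [card_biUnion hdisj, sum_congr rfl fun u _ => card_closedNbhd hS u, sum_const, smul_eq_mul]
  have hsub : A.biUnion (closedNbhd S) ⊆ Icc (-(n : ℤ) - M) (n + M) := by
    intro v hv
    obtain ⟨u, hu, huv⟩ := mem_biUnion.1 hv
    have hu := mem_Icc.1 (mem_filter.1 hu).1
    have hv := mem_Icc.1 (closedNbhd_subset_Icc hM u huv)
    exact mem_Icc.2 (by omega)
  have hcard := card_le_card hsub
  simp only [Int.card_Icc] at hcard
  rw [show windowCount D n = #A from rfl, mul_comm (#S + 1)]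
  omega

theorem tendsto_one_add_div_div (b c : ℝ) :
    Tendsto (fun n : ℕ => (1 + b / (2 * n + 1)) / c) atTop (𝓝 (1 / c)) := by
  have hden : Tendsto (fun n : ℕ => 2 * (n : ℝ) + 1) atTop atTop :=
    tendsto_atTop_add_const_right _ _ (tendsto_natCast_atTop_atTop.const_mul_atTop two_pos)
  simpa using ((tendsto_const_nhds.div_atTop hden).const_add 1).div_const c

theorem lowerDensity_eq_liminf (D : Set ℤ) :
    lowerDensity D = liminf (fun n : ℕ => (windowCount D n : ℝ) / (2 * n + 1)) atTop := rfl

theorem windowCount_div_le_one (D : Set ℤ) (n : ℕ) : (windowCount D n : ℝ) / (2 * n + 1) ≤ 1 := by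
  rw [div_le_one (by positivity)]
  exact_mod_cast windowCount_le D n

theorem windowCount_div_lower (hdom : IsDominating ↑S D) (hM : ∀ s ∈ S, s.natAbs ≤ M) (n : ℕ) :
    (1 + -(2 * M) / (2 * n + 1)) / (#S + 1 : ℝ) ≤ (windowCount D n : ℝ) / (2 * n + 1) := by
  have h : (2 * n + 1 : ℝ) ≤ (#S + 1) * windowCount D n + 2 * M := by
    exact_mod_cast windowCount_lower hdom hM n
  rw [div_le_iff₀ (by positivity), div_mul_eq_mul_div, le_div_iff₀ (by positivity)]
  field_simp
  linarith

theorem windowCount_div_upper (hS : (0 : ℤ) ∉ S) (hpack : D.PairwiseDisjoint (closedNbhd S))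
    (hM : ∀ s ∈ S, s.natAbs ≤ M) (n : ℕ) :
    (windowCount D n : ℝ) / (2 * n + 1) ≤ (1 + 2 * M / (2 * n + 1)) / (#S + 1 : ℝ) := by
  have h : ((#S + 1) * windowCount D n : ℝ) ≤ 2 * n + 1 + 2 * M := by
    exact_mod_cast windowCount_upper hS hpack hM n
  rw [le_div_iff₀ (by positivity), div_mul_eq_mul_div, div_le_iff₀ (by positivity)]
  field_simp
  linarith

theorem exists_natAbs_le (S : Finset ℤ) : ∃ M : ℕ, ∀ s ∈ S, s.natAbs ≤ M :=
  ⟨S.sup Int.natAbs, fun _ hs => le_sup hs⟩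

theorem le_lowerDensity (hdom : IsDominating ↑S D) : 1 / (#S + 1 : ℝ) ≤ lowerDensity D := by
  obtain ⟨M, hM⟩ := exists_natAbs_le S
  have hlim := tendsto_one_add_div_div (-(2 * M)) (#S + 1)
  rw [lowerDensity_eq_liminf, ← hlim.liminf_eq]
  exact liminf_le_liminf (Eventually.of_forall (windowCount_div_lower hdom hM))
    hlim.isBoundedUnder_ge (isCoboundedUnder_ge_of_le atTop (windowCount_div_le_one D))

theorem lowerDensity_eq (hS : (0 : ℤ) ∉ S) (hdom : IsDominating ↑S D)
    (hpack : D.PairwiseDisjoint (closedNbhd S)) : lowerDensity D = 1 / (#S + 1 : ℝ) := by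
  obtain ⟨M, hM⟩ := exists_natAbs_le S
  refine Tendsto.liminf_eq (tendsto_of_tendsto_of_tendsto_of_le_of_le
    (tendsto_one_add_div_div (-(2 * M)) _) (tendsto_one_add_div_div (2 * M) _) ?_ ?_)
  · exact windowCount_div_lower hdom hM
  · exact windowCount_div_upper hS hpack hM

end IntDomination

open IntDomination

theorem stmt_8 (S : Finset ℤ) (hS : (0:ℤ) ∉ S) (D : Set ℤ)
    (heff : ∀ v : ℤ, ∃! u : ℤ, u ∈ D ∧ (u = v ∨ ∃ s ∈ S, v = u + s)) :
    domRatio ↑S = 1 / ((S.card : ℝ) + 1) := by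
  have hdom : IsDominating ↑S D := isDominating_iff.2 fun v =>
    let ⟨u, ⟨hu, huv⟩, _⟩ := heff v
    ⟨u, hu, mem_closedNbhd.2 huv⟩
  have hpack : D.PairwiseDisjoint (closedNbhd S) := by
    intro u hu u' hu' hne
    refine disjoint_left.2 fun v hv hv' => hne ?_
    exact (heff v).unique ⟨hu, mem_closedNbhd.1 hv⟩ ⟨hu', mem_closedNbhd.1 hv'⟩
  refine IsLeast.csInf_eq ⟨⟨D, hdom, (lowerDensity_eq hS hdom hpack).symm⟩, ?_⟩
  rintro _ ⟨D', hD', rfl⟩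
  exact le_lowerDensity hD'
end

section
/- Let s ≥ 1 and S = {i_1(s+1)+1, i_2(s+1)+2, …, i_s(s+1)+s} for arbitrary integers i_1, …, i_s (so |S| = s). Then (s+1)ℤ is an efficient dominating set of Γ(ℤ, S), i.e., every integer is dominated by exactly one element of (s+1)ℤ. -/
open Filter

theorem stmt_9 (s : ℕ) (hs : 1 ≤ s) (i : ℤ → ℤ)
    (S : Set ℤ) (hSdef : S = {x : ℤ | ∃ r ∈ Finset.Icc 1 (s:ℤ), x = i r * ((s:ℤ)+1) + r}) :
    ∀ v : ℤ, ∃! u : ℤ, ((s:ℤ)+1) ∣ u ∧ (u = v ∨ ∃ t ∈ S, v = u + t) := by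
  intro v
  subst hSdef
  set m : ℤ := (s:ℤ)+1 with hm
  have hm0 : 0 < m := by positivity
  have hr0 : 0 ≤ v % m := Int.emod_nonneg v (by omega)
  have hrm : v % m < m := Int.emod_lt_of_pos v hm0
  have hdm : m * (v / m) + v % m = v := Int.mul_ediv_add_emod v m
  -- if v = u + (i r * m + r) with m ∣ u and 1 ≤ r ≤ s, then r = v % m
  have key : ∀ u k r : ℤ, u = m * k → 1 ≤ r → r ≤ (s:ℤ) →
      v = u + (i r * ((s:ℤ)+1) + r) → r = v % m := by
    intro u k r hk hr1 hr2 hvt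
    have hv : v = r + m * (k + i r) := by rw [hvt, hk]; ring
    rw [hv, Int.add_mul_emod_self_left, Int.emod_eq_of_lt (by omega) (by omega)]
  by_cases h0 : v % m = 0
  · refine ⟨v, ⟨⟨v / m, by omega⟩, Or.inl rfl⟩, ?_⟩
    rintro u ⟨⟨k, hk⟩, h | ⟨t, ⟨r, hr, rfl⟩, hvt⟩⟩
    · exact h
    · simp only [Finset.mem_Icc] at hr
      have := key u k r hk hr.1 hr.2 hvt
      omega
  · refine ⟨v - v % m - i (v % m) * m, ⟨⟨v / m - i (v % m), by rw [mul_sub, mul_comm m (i (v % m))]; linarith⟩,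
      Or.inr ⟨i (v % m) * m + v % m,
        ⟨v % m, Finset.mem_Icc.mpr ⟨by omega, by omega⟩, by rw [hm]⟩, by ring⟩⟩, ?_⟩
    rintro u ⟨⟨k, hk⟩, h | ⟨t, ⟨r, hr, rfl⟩, hvt⟩⟩
    · exfalso
      have : v % m = 0 := by rw [h] at hk; rw [hk]; exact Int.mul_emod_right m k
      exact h0 this
    · simp only [Finset.mem_Icc] at hr
      have hrr := key u k r hk hr.1 hr.2 hvt
      rw [← hrr]
      linarith
end

section
/- Let s ≥ 1 and S = {i_1(s+1)+1, …, i_s(s+1)+s} with i_1, …, i_s ∈ ℤ. Then the domination ratio γ̄(ℤ, S) equals 1/(s+1). -/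
open Filter

/-!
A vertex `u` dominates only `u + ({0} ∪ S)`, and the vertices dominating `[-n, n]` lie in
`[-(n + M), n + M]` with `M = max |S|`; hence every dominating set has lower density at least
`1 / (|S| + 1) ≥ 1 / (s + 1)`. Conversely `S` meets every nonzero residue class modulo `s + 1`,
so the multiples of `s + 1` dominate, and their density is exactly `1 / (s + 1)`.
-/

open Finset Topology

open scoped Classical

noncomputable def windowCount (D : Set ℤ) (n : ℕ) : ℕ := #((Icc (-(n : ℤ)) n).filter (· ∈ D))

theorem lowerDensity_eq_liminf_windowCount (D : Set ℤ) :
    lowerDensity D = liminf (fun n : ℕ => (windowCount D n : ℝ) / (2 * n + 1)) atTop := rfl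

theorem card_Icc_neg_self (n : ℕ) : #(Icc (-(n : ℤ)) n) = 2 * n + 1 := by
  rw [Int.card_Icc]; omega

theorem windowCount_le (D : Set ℤ) (n : ℕ) : windowCount D n ≤ 2 * n + 1 :=
  (card_filter_le _ _).trans (card_Icc_neg_self n).le

theorem le_lowerDensity_of_tendsto {D : Set ℤ} {b : ℕ → ℝ} {c : ℝ}
    (hb : Tendsto b atTop (𝓝 c))
    (hbD : ∀ᶠ n in atTop, b n ≤ windowCount D n / (2 * n + 1)) : c ≤ lowerDensity D := by
  have hbdd : IsCoboundedUnder (· ≥ ·) atTop fun n : ℕ => (windowCount D n : ℝ) / (2 * n + 1) :=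
    isCoboundedUnder_ge_of_le atTop (x := 1) fun n =>
      div_le_one_of_le₀ (by exact_mod_cast windowCount_le D n) (by positivity)
  rw [lowerDensity_eq_liminf_windowCount, ← hb.liminf_eq]
  exact liminf_le_liminf hbD hb.isBoundedUnder_ge hbdd

theorem windowCount_setOf_dvd {k : ℕ} (hk : 0 < k) (n : ℕ) :
    windowCount {m | (k : ℤ) ∣ m} n = 2 * (n / k) + 1 := by
  have hk' : (0 : ℤ) < k := by exact_mod_cast hk
  have hmul : ∀ j : ℤ, k * j ∈ Icc (-(n : ℤ)) n ↔ j ∈ Icc (-((n / k : ℕ) : ℤ)) (n / k : ℕ) := by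
    intro j
    simp only [mem_Icc, Int.natCast_div, neg_le, Int.le_ediv_iff_mul_le hk']
    constructor <;> rintro ⟨h₁, h₂⟩ <;> constructor <;> linarith
  rw [windowCount, ← card_Icc_neg_self (n / k),
    ← card_image_of_injective (Icc _ _) (mul_right_injective₀ hk'.ne')]
  congr 1
  ext m
  simp only [mem_filter, Set.mem_ofPred_eq, mem_image]
  constructor
  · rintro ⟨hm, j, rfl⟩
    exact ⟨j, (hmul j).1 hm, rfl⟩
  · rintro ⟨j, hj, rfl⟩
    exact ⟨(hmul j).2 hj, dvd_mul_right _ _⟩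

theorem tendsto_two_mul_div_add_one_div {k : ℕ} (hk : 0 < k) :
    Tendsto (fun n : ℕ => (2 * ((n / k : ℕ) : ℝ) + 1) / (2 * n + 1)) atTop (𝓝 (k : ℝ)⁻¹) := by
  have hlim : ∀ a : ℝ, Tendsto (fun n : ℕ => (2 / k * n + a) / (2 * n + 1)) atTop (𝓝 (k : ℝ)⁻¹) :=
    fun a => by
      convert tendsto_add_mul_div_add_mul_atTop_nhds a 1 (2 / (k : ℝ)) two_ne_zero using 2
      · ring
      · field_simp
  refine tendsto_of_tendsto_of_tendsto_of_le_of_le (hlim (-1)) (hlim 1) (fun n => ?_) (fun n => ?_)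
  all_goals
    have hfloor : ((n / k : ℕ) : ℝ) = ⌊(n : ℝ) / k⌋₊ := by rw [Nat.floor_div_eq_div]
    have h₁ := Nat.floor_le (a := (n : ℝ) / k) (by positivity)
    have h₂ := Nat.lt_floor_add_one ((n : ℝ) / k)
    have : 2 / (k : ℝ) * n = 2 * (n / k) := by ring
    refine div_le_div_of_nonneg_right ?_ (by positivity)
    linarith

theorem lowerDensity_setOf_dvd {k : ℕ} (hk : 0 < k) :
    lowerDensity {m : ℤ | (k : ℤ) ∣ m} = (k : ℝ)⁻¹ := by
  rw [lowerDensity_eq_liminf_windowCount]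
  simp only [windowCount_setOf_dvd hk]
  push_cast
  exact (tendsto_two_mul_div_add_one_div hk).liminf_eq

theorem IsDominating.two_mul_add_one_le_windowCount {T : Finset ℤ} {D : Set ℤ}
    (hD : IsDominating T D) {M : ℕ} (hM : ∀ t ∈ T, t.natAbs ≤ M) (n : ℕ) :
    2 * n + 1 ≤ (#T + 1) * windowCount D (n + M) := by
  set F := (Icc (-((n + M : ℕ) : ℤ)) (n + M : ℕ)).filter (· ∈ D)
  have hcover : Icc (-(n : ℤ)) n ⊆ F.biUnion fun u => (insert 0 T).image (u + ·) := by
    intro v hv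
    rw [mem_Icc] at hv
    simp only [mem_biUnion, mem_image, mem_insert, F, mem_filter, mem_Icc]
    rcases hD v with hvD | ⟨u, huD, t, ht, rfl⟩
    · exact ⟨v, ⟨⟨by omega, by omega⟩, hvD⟩, 0, Or.inl rfl, add_zero v⟩
    · have := hM t ht
      exact ⟨u, ⟨⟨by omega, by omega⟩, huD⟩, t, Or.inr ht, rfl⟩
  calc 2 * n + 1 = #(Icc (-(n : ℤ)) n) := (card_Icc_neg_self n).symm
    _ ≤ #F * (#T + 1) := (card_le_card hcover).trans <| card_biUnion_le_card_mul _ _ _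
        fun u _ => card_image_le.trans (card_insert_le _ _)
    _ = (#T + 1) * windowCount D (n + M) := mul_comm _ _

theorem IsDominating.inv_card_add_one_le_lowerDensity {T : Finset ℤ} {D : Set ℤ}
    (hD : IsDominating T D) : ((#T : ℝ) + 1)⁻¹ ≤ lowerDensity D := by
  set M := T.sup Int.natAbs
  set c : ℝ := ((#T : ℝ) + 1)⁻¹
  have hlim : Tendsto (fun n : ℕ => (c * (1 - 2 * M) + c * 2 * n) / (1 + 2 * n)) atTop (𝓝 c) := by
    convert tendsto_add_mul_div_add_mul_atTop_nhds (c * (1 - 2 * M)) 1 (c * 2) two_ne_zero using 2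
    ring
  refine le_lowerDensity_of_tendsto hlim ?_
  filter_upwards [eventually_ge_atTop M] with n hn
  have hcount := hD.two_mul_add_one_le_windowCount (fun t ht => le_sup (f := Int.natAbs) ht) (n - M)
  rw [Nat.sub_add_cancel hn] at hcount
  have hcount' : (2 * ((n : ℝ) - M) + 1) ≤ ((#T : ℝ) + 1) * windowCount D n := by
    have := (Nat.cast_le (α := ℝ)).2 hcount
    push_cast [Nat.cast_sub hn] at this
    linarith
  rw [add_comm (1 : ℝ)]
  refine div_le_div_of_nonneg_right ?_ (by positivity)
  calc c * (1 - 2 * M) + c * 2 * n = c * (2 * ((n : ℝ) - M) + 1) := by ring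
    _ ≤ c * (((#T : ℝ) + 1) * windowCount D n) := by gcongr
    _ = windowCount D n := by simp only [c]; field_simp

theorem isDominating_setOf_dvd {S : Set ℤ} {k : ℤ}
    (hS : ∀ v, ¬ k ∣ v → ∃ t ∈ S, t ≡ v [ZMOD k]) : IsDominating S {m | k ∣ m} := by
  intro v
  by_cases hv : k ∣ v
  · exact Or.inl hv
  · obtain ⟨t, ht, htv⟩ := hS v hv
    exact Or.inr ⟨v - t, htv.dvd, t, ht, by ring⟩

theorem exists_mem_Icc_mul_add_modEq (s : ℕ) (i : ℤ → ℤ) {v : ℤ} (hv : ¬ (s + 1 : ℤ) ∣ v) :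
    ∃ r ∈ Icc 1 (s : ℤ), i r * (s + 1) + r ≡ v [ZMOD s + 1] := by
  have hpos : (0 : ℤ) < s + 1 := by positivity
  have hne : v % (s + 1) ≠ 0 := fun h => hv (Int.dvd_of_emod_eq_zero h)
  have hlt := Int.emod_lt_of_pos v hpos
  have hnonneg := Int.emod_nonneg v hpos.ne'
  exact ⟨v % (s + 1), mem_Icc.2 ⟨by omega, by omega⟩, by simp [Int.ModEq]⟩

theorem stmt_10_general (s : ℕ) (i : ℤ → ℤ)
    (S : Set ℤ) (hSdef : S = {x : ℤ | ∃ r ∈ Finset.Icc 1 (s:ℤ), x = i r * ((s:ℤ)+1) + r}) :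
    domRatio S = 1 / ((s:ℝ) + 1) := by
  set T := (Icc (1 : ℤ) s).image fun r => i r * ((s : ℤ) + 1) + r
  have hST : S = T := by
    rw [hSdef]; ext x; simp [T, eq_comm]
  have hT : #T ≤ s := card_image_le.trans (by simp)
  have hdom : IsDominating S {m | (s + 1 : ℤ) ∣ m} := isDominating_setOf_dvd fun v hv => by
    obtain ⟨r, hr, hrv⟩ := exists_mem_Icc_mul_add_modEq s i hv
    exact ⟨_, hSdef ▸ ⟨r, hr, rfl⟩, hrv⟩
  have hdens : lowerDensity {m | (s + 1 : ℤ) ∣ m} = 1 / ((s : ℝ) + 1) := by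
    simpa using lowerDensity_setOf_dvd s.succ_pos
  refine IsLeast.csInf_eq ⟨⟨_, hdom, hdens.symm⟩, ?_⟩
  rintro _ ⟨D, hD, rfl⟩
  rw [hST] at hD
  calc 1 / ((s : ℝ) + 1) ≤ ((#T : ℝ) + 1)⁻¹ := by rw [one_div]; gcongr
    _ ≤ lowerDensity D := hD.inv_card_add_one_le_lowerDensity

theorem stmt_10 (s : ℕ) (hs : 1 ≤ s) (i : ℤ → ℤ)
    (S : Set ℤ) (hSdef : S = {x : ℤ | ∃ r ∈ Finset.Icc 1 (s:ℤ), x = i r * ((s:ℤ)+1) + r}) :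
    domRatio S = 1 / ((s:ℝ) + 1) :=
  stmt_10_general s i S hSdef
end

section
/- Let S ⊆ ℤ \ {0} and let d > 0 divide every element of S, with S/d = {s/d : s ∈ S}. Then γ̄(ℤ, S/d) = γ̄(ℤ, S). -/
open Filter

/-!
A dominating set `D` of `Γ(ℤ, S)` splits into the `d` slices `{x | d * x + r ∈ D}`, `0 ≤ r < d`;
each dominates `Γ(ℤ, S/d)` because every edge of `Γ(ℤ, S)` stays inside a residue class mod `d`.
On the window `[-d m, d m + d - 1]` the slices partition `D`, so their lower densities sum to at
most `d · δ(D)` and some slice has density at most `δ(D)`. Conversely, a dominating set `D` of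
`Γ(ℤ, S/d)` blows up to `{y | y / d ∈ D}`, which dominates `Γ(ℤ, S)` and has density at most `δ(D)`.
-/

open Topology

lemma sum_liminf_le_liminf_sum {ι α : Type*} {f : Filter α} [f.NeBot] (s : Finset ι)
    (u : ι → α → ℝ) {B : ℝ} (h₀ : ∀ i x, 0 ≤ u i x) (h₁ : ∀ i x, u i x ≤ B) :
    ∑ i ∈ s, liminf (u i) f ≤ liminf (fun x => ∑ i ∈ s, u i x) f := by
  induction s using Finset.cons_induction with
  | empty => simp [liminf_const]
  | cons i s hi ih =>
    simp only [Finset.sum_cons]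
    refine (add_le_add_right ih _).trans (le_liminf_add (u := u i) ?_ ?_ ?_ ?_)
    · exact isBoundedUnder_of ⟨0, h₀ i⟩
    · exact isBoundedUnder_of ⟨B, h₁ i⟩
    · exact isBoundedUnder_of ⟨0, fun x => Finset.sum_nonneg fun j _ => h₀ j x⟩
    · exact isCoboundedUnder_ge_of_le _ fun x => Finset.sum_le_card_nsmul _ _ _ fun j _ => h₁ j x

lemma liminf_le_mul_liminf_of_comp_le {a b ρ : ℕ → ℝ} {φ : ℕ → ℕ} {L B : ℝ} (hL : 0 ≤ L)
    (ha : ∀ n, 0 ≤ a n) (hb₀ : ∀ n, 0 ≤ b n) (hb : ∀ n, b n ≤ B)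
    (hφ : Tendsto φ atTop atTop) (hρ : Tendsto ρ atTop (𝓝 L))
    (h : ∀ᶠ n in atTop, a (φ n) ≤ ρ n * b n) :
    liminf a atTop ≤ L * liminf b atTop := by
  set l := liminf b atTop
  have key : ∀ ε > 0, liminf a atTop ≤ (L + ε) * (l + ε) := by
    intro ε hε
    have hbl : ∃ᶠ n in atTop, b n < l + ε :=
      frequently_lt_of_liminf_lt (isCoboundedUnder_ge_of_le _ hb) (by linarith)
    have hρL : ∀ᶠ n in atTop, ρ n < L + ε := hρ.eventually (gt_mem_nhds (by linarith))
    have haφ : ∃ᶠ n in atTop, a (φ n) ≤ (L + ε) * (l + ε) :=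
      (hbl.and_eventually (hρL.and h)).mono fun n ⟨hbn, hρn, hn⟩ =>
        hn.trans (mul_le_mul hρn.le hbn.le (hb₀ n) (by linarith))
    exact liminf_le_of_frequently_le (hφ.frequently haφ) (isBoundedUnder_of ⟨0, ha⟩)
  have hlim : Tendsto (fun ε => (L + ε) * (l + ε)) (𝓝[>] 0) (𝓝 (L * l)) := by
    have : Continuous (fun ε : ℝ => (L + ε) * (l + ε)) := by fun_prop
    simpa using (this.tendsto 0).mono_left nhdsWithin_le_nhds
  exact ge_of_tendsto hlim (eventually_nhdsWithin_of_forall key)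

lemma tendsto_mul_natCast_add_one_atTop {c : ℝ} (hc : 0 < c) :
    Tendsto (fun n : ℕ => c * n + 1) atTop atTop :=
  tendsto_atTop_add_const_right _ _ (tendsto_natCast_atTop_atTop.const_mul_atTop hc)

lemma card_filter_Icc_mul_eq_sum (P : ℤ → Prop) [DecidablePred P] {d : ℤ} (hd : 0 < d)
    (a b : ℤ) :
    ((Finset.Icc (d * a) (d * b + d - 1)).filter P).card =
      ∑ r ∈ Finset.Ico 0 d, ((Finset.Icc a b).filter (fun x => P (d * x + r))).card := by
  have hblocks : ((Finset.Icc (d * a) (d * b + d - 1)).filter P).card =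
      ((Finset.Icc a b ×ˢ Finset.Ico 0 d).filter (fun p => P (d * p.1 + p.2))).card := by
    refine Finset.card_nbij' (fun y => (y / d, y % d)) (fun p => d * p.1 + p.2) ?_ ?_ ?_ ?_
    · intro y hy
      simp only [Finset.coe_filter, Finset.mem_Icc, Finset.mem_product,
        Finset.mem_Ico] at hy ⊢
      obtain ⟨⟨hay, hyb⟩, hP⟩ := hy
      refine ⟨⟨⟨(Int.le_ediv_iff_mul_le hd).2 (by linarith), ?_⟩,
        Int.emod_nonneg y hd.ne', Int.emod_lt_of_pos y hd⟩, by rwa [Int.mul_ediv_add_emod]⟩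
      exact Int.lt_add_one_iff.1 ((Int.ediv_lt_iff_lt_mul hd).2 (by linarith))
    · intro p hp
      simp only [Finset.coe_filter, Finset.mem_Icc, Finset.mem_product,
        Finset.mem_Ico] at hp ⊢
      obtain ⟨⟨⟨ha, hb⟩, h0, hd'⟩, hP⟩ := hp
      exact ⟨⟨by nlinarith, by nlinarith⟩, hP⟩
    · intro y _
      simp [Int.mul_ediv_add_emod]
    · rintro ⟨x, r⟩ hp
      simp only [Finset.coe_filter, Finset.mem_product, Finset.mem_Ico] at hp
      obtain ⟨⟨-, h0, hr⟩, -⟩ := hp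
      have hdiv : (d * x + r) / d = x := by
        rw [add_comm, Int.add_mul_ediv_left _ _ hd.ne', Int.ediv_eq_zero_of_lt h0 hr, zero_add]
      simp [hdiv, Int.emod_eq_of_lt h0 hr]
  rw [hblocks, Finset.card_filter, Finset.sum_product_right]
  simp only [Finset.card_filter]

lemma IsDominating.preimage_mul_add {S D : Set ℤ} {d : ℤ} (hD : IsDominating S D)
    (hdvd : ∀ s ∈ S, d ∣ s) (r : ℤ) :
    IsDominating {x | d * x ∈ S} {x | d * x + r ∈ D} := by
  intro v
  rcases hD (d * v + r) with hv | ⟨u, hu, s, hs, hvu⟩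
  · exact Or.inl hv
  · obtain ⟨t, rfl⟩ := hdvd s hs
    refine Or.inr ⟨v - t, ?_, t, hs, by ring⟩
    have : d * (v - t) + r = u := by linear_combination hvu
    simpa [this] using hu

lemma IsDominating.preimage_ediv {S D : Set ℤ} {d : ℤ} (hd : d ≠ 0)
    (hD : IsDominating {x | d * x ∈ S} D) :
    IsDominating S {y | y / d ∈ D} := by
  intro v
  rcases hD (v / d) with hv | ⟨u, hu, t, ht, hvu⟩
  · exact Or.inl hv
  · refine Or.inr ⟨v - d * t, ?_, d * t, ht, by ring⟩
    simpa [Int.sub_mul_ediv_left v t hd, hvu] using hu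

open scoped Classical in
noncomputable def intervalCount (U : Set ℤ) (n : ℕ) : ℕ :=
  ((Finset.Icc (-(n:ℤ)) n).filter (fun m => m ∈ U)).card

noncomputable def intervalDensity (U : Set ℤ) (n : ℕ) : ℝ :=
  (intervalCount U n : ℝ) / (2 * n + 1)

lemma lowerDensity_eq_liminf (U : Set ℤ) :
    lowerDensity U = liminf (intervalDensity U) atTop := rfl

lemma intervalCount_mono (U : Set ℤ) {m n : ℕ} (h : m ≤ n) :
    intervalCount U m ≤ intervalCount U n := by
  unfold intervalCount
  gcongr

lemma intervalCount_le (U : Set ℤ) (n : ℕ) : intervalCount U n ≤ 2 * n + 1 := by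
  classical
  unfold intervalCount
  refine (Finset.card_filter_le _ _).trans ?_
  rw [Int.card_Icc]
  omega

lemma intervalDensity_nonneg (U : Set ℤ) (n : ℕ) : 0 ≤ intervalDensity U n := by
  unfold intervalDensity
  positivity

lemma intervalDensity_le_one (U : Set ℤ) (n : ℕ) : intervalDensity U n ≤ 1 := by
  unfold intervalDensity
  rw [div_le_one (by positivity)]
  exact_mod_cast intervalCount_le U n

lemma lowerDensity_nonneg (U : Set ℤ) : 0 ≤ lowerDensity U :=
  le_liminf_of_le (isCoboundedUnder_ge_of_le _ (intervalDensity_le_one U))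
    (Eventually.of_forall (intervalDensity_nonneg U))

lemma sum_intervalCount_preimage_mul_add_le (D : Set ℤ) {e : ℕ} (he : 0 < e) (m : ℕ) :
    ∑ r ∈ Finset.Ico (0 : ℤ) e, intervalCount {x | (e : ℤ) * x + r ∈ D} m ≤
      intervalCount D (e * m + e - 1) := by
  classical
  have hcast : ((e * m + e - 1 : ℕ) : ℤ) = e * m + e - 1 := by
    rw [Nat.cast_sub (by nlinarith)]
    push_cast
    ring
  calc ∑ r ∈ Finset.Ico (0 : ℤ) e, intervalCount {x | (e : ℤ) * x + r ∈ D} m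
      = ((Finset.Icc ((e : ℤ) * -m) (e * m + e - 1)).filter (· ∈ D)).card :=
        (card_filter_Icc_mul_eq_sum (· ∈ D) (by exact_mod_cast he) (-m) m).symm
    _ ≤ intervalCount D (e * m + e - 1) := by
        unfold intervalCount
        rw [hcast]
        gcongr
        nlinarith

lemma intervalCount_preimage_ediv_le (D : Set ℤ) {e : ℕ} (he : 0 < e) (m : ℕ) :
    intervalCount {y | y / (e : ℤ) ∈ D} (e * m) ≤ e * intervalCount D m := by
  classical
  have he' : (0 : ℤ) < e := by exact_mod_cast he
  calc intervalCount {y | y / (e : ℤ) ∈ D} (e * m)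
      ≤ ((Finset.Icc ((e : ℤ) * -m) (e * m + e - 1)).filter (· / (e : ℤ) ∈ D)).card := by
        unfold intervalCount
        push_cast
        exact Finset.card_le_card (Finset.filter_subset_filter _
          (Finset.Icc_subset_Icc (by rw [mul_neg]) (by linarith)))
    _ = ∑ r ∈ Finset.Ico (0 : ℤ) e, ((Finset.Icc (-(m : ℤ)) m).filter (· ∈ D)).card := by
        rw [card_filter_Icc_mul_eq_sum _ he']
        refine Finset.sum_congr rfl fun r hr => ?_
        rw [Finset.mem_Ico] at hr
        congr 1
        refine Finset.filter_congr fun x _ => ?_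
        rw [add_comm, Int.add_mul_ediv_left _ _ he'.ne', Int.ediv_eq_zero_of_lt hr.1 hr.2,
          zero_add]
    _ = e * intervalCount D m := by
        simp [intervalCount]

lemma sum_intervalDensity_preimage_mul_add_le (D : Set ℤ) {e : ℕ} (he : 0 < e) {m N : ℕ}
    (h : e * m + e - 1 ≤ N) :
    ∑ r ∈ Finset.Ico (0 : ℤ) e, intervalDensity {x | (e : ℤ) * x + r ∈ D} m ≤
      intervalCount D N / (2 * m + 1) := by
  unfold intervalDensity
  rw [← Finset.sum_div]
  gcongr
  exact_mod_cast (sum_intervalCount_preimage_mul_add_le D he m).trans (intervalCount_mono D h)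

lemma sum_intervalDensity_preimage_mul_add_le_mul (D : Set ℤ) {e : ℕ} (he : 0 < e) {N : ℕ}
    (hN : 2 * e ≤ N) :
    ∑ r ∈ Finset.Ico (0 : ℤ) e, intervalDensity {x | (e : ℤ) * x + r ∈ D} (N / e - 1) ≤
      (e : ℝ) / (1 - 3 * e / (2 * N + 1)) * intervalDensity D N := by
  set q := N / e
  have hq : 2 ≤ q := (Nat.le_div_iff_mul_le he).2 (by linarith)
  have hqN : e * q ≤ N := Nat.mul_div_le N e
  have hNq : N < e * q + e := by
    simpa [Nat.mul_add] using Nat.lt_mul_div_succ N he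
  -- The window `[-e (q - 1), e (q - 1) + e - 1]` lies in `[-N, N]` and has length `≥ 2 N + 1 - 3 e`.
  refine (sum_intervalDensity_preimage_mul_add_le D he (m := q - 1) (N := N)
    (by rw [Nat.mul_sub_one]; omega)).trans ?_
  have hwindow : (2 * N + 1 - 3 * e : ℝ) ≤ e * (2 * ((q - 1 : ℕ) : ℝ) + 1) := by
    have : (N : ℝ) + 1 ≤ e * q + e := by exact_mod_cast hNq
    push_cast [Nat.one_le_of_lt hq]
    linarith
  have hpos : (0 : ℝ) < 2 * N + 1 - 3 * e := by
    have : (2 * e : ℝ) ≤ N := by exact_mod_cast hN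
    linarith
  have he' : (0 : ℝ) < e := by exact_mod_cast he
  unfold intervalDensity
  calc (intervalCount D N : ℝ) / (2 * ((q - 1 : ℕ) : ℝ) + 1)
      = e * intervalCount D N / (e * (2 * ((q - 1 : ℕ) : ℝ) + 1)) := by
        rw [mul_div_mul_left _ _ he'.ne']
    _ ≤ e * intervalCount D N / (2 * N + 1 - 3 * e) := by gcongr
    _ = _ := by
        have hN1 : (0 : ℝ) < 2 * N + 1 := by positivity
        rw [one_sub_div hN1.ne']
        field_simp

lemma exists_lowerDensity_preimage_mul_add_le (D : Set ℤ) {e : ℕ} (he : 0 < e) :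
    ∃ r : ℤ, lowerDensity {x | (e : ℤ) * x + r ∈ D} ≤ lowerDensity D := by
  have hφ : Tendsto (fun N => N / e - 1) atTop atTop :=
    (tendsto_sub_atTop_nat 1).comp (Nat.tendsto_div_const_atTop he.ne')
  have hρ : Tendsto (fun N : ℕ => (e : ℝ) / (1 - 3 * e / (2 * N + 1))) atTop (𝓝 e) := by
    have hN : Tendsto (fun N : ℕ => 3 * (e : ℝ) / (2 * N + 1)) atTop (𝓝 0) :=
      tendsto_const_nhds.div_atTop (tendsto_mul_natCast_add_one_atTop two_pos)
    simpa [Pi.div_def] using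
      tendsto_const_nhds.div (tendsto_const_nhds.sub hN) (by norm_num : (1 : ℝ) - 0 ≠ 0)
  have hcomp := (eventually_ge_atTop (2 * e)).mono fun N hN =>
    sum_intervalDensity_preimage_mul_add_le_mul D he hN
  have hsum : ∑ r ∈ Finset.Ico (0 : ℤ) e, lowerDensity {x | (e : ℤ) * x + r ∈ D} ≤
      ∑ r ∈ Finset.Ico (0 : ℤ) e, lowerDensity D :=
    calc _ ≤ liminf (fun N => ∑ r ∈ Finset.Ico (0 : ℤ) e,
              intervalDensity {x | (e : ℤ) * x + r ∈ D} N) atTop :=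
          sum_liminf_le_liminf_sum _ _ (fun _ => intervalDensity_nonneg _)
            (fun _ => intervalDensity_le_one _)
      _ ≤ e * lowerDensity D :=
          liminf_le_mul_liminf_of_comp_le (by positivity)
            (fun _ => Finset.sum_nonneg fun _ _ => intervalDensity_nonneg _ _)
            (intervalDensity_nonneg D) (intervalDensity_le_one D) hφ hρ hcomp
      _ = _ := by simp
  obtain ⟨r, -, hr⟩ := Finset.exists_le_of_sum_le (by simpa using he) hsum
  exact ⟨r, hr⟩

lemma lowerDensity_preimage_ediv_le (D : Set ℤ) {e : ℕ} (he : 0 < e) :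
    lowerDensity {y | y / (e : ℤ) ∈ D} ≤ lowerDensity D := by
  have hφ : Tendsto (fun m => e * m) atTop atTop :=
    tendsto_atTop_mono (fun m => Nat.le_mul_of_pos_left m he) tendsto_id
  have hρ : Tendsto (fun m : ℕ => 1 + ((e : ℝ) - 1) / (2 * e * m + 1)) atTop (𝓝 1) := by
    simpa using tendsto_const_nhds.add
      (tendsto_const_nhds.div_atTop (tendsto_mul_natCast_add_one_atTop (by positivity)))
  have hcomp : ∀ m, intervalDensity {y | y / (e : ℤ) ∈ D} (e * m) ≤
      (1 + ((e : ℝ) - 1) / (2 * e * m + 1)) * intervalDensity D m := by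
    intro m
    have hcount : (intervalCount {y | y / (e : ℤ) ∈ D} (e * m) : ℝ) ≤ e * intervalCount D m := by
      exact_mod_cast intervalCount_preimage_ediv_le D he m
    unfold intervalDensity
    calc _ ≤ (e * intervalCount D m : ℝ) / (2 * (e * m : ℕ) + 1) := by gcongr
      _ = _ := by push_cast; field_simp; ring
  simpa [lowerDensity_eq_liminf] using liminf_le_mul_liminf_of_comp_le zero_le_one
    (intervalDensity_nonneg _) (intervalDensity_nonneg D) (intervalDensity_le_one D) hφ hρ
    (Eventually.of_forall hcomp)

lemma domRatio_le_lowerDensity {S D : Set ℤ} (hD : IsDominating S D) :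
    domRatio S ≤ lowerDensity D :=
  csInf_le ⟨0, by rintro _ ⟨D, -, rfl⟩; exact lowerDensity_nonneg D⟩ ⟨D, hD, rfl⟩

lemma le_domRatio {S : Set ℤ} {x : ℝ} (h : ∀ D, IsDominating S D → x ≤ lowerDensity D) :
    x ≤ domRatio S :=
  le_csInf ⟨_, Set.univ, fun _ => Or.inl trivial, rfl⟩ (by rintro _ ⟨D, hD, rfl⟩; exact h D hD)

theorem stmt_11_general (S : Set ℤ) (d : ℤ) (hd : 0 < d)
    (hdvd : ∀ s ∈ S, d ∣ s) :
    domRatio {x : ℤ | d * x ∈ S} = domRatio S := by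
  obtain ⟨e, rfl⟩ := Int.eq_ofNat_of_zero_le hd.le
  have he : 0 < e := by exact_mod_cast hd
  apply le_antisymm
  · refine le_domRatio fun D hD => ?_
    obtain ⟨r, hr⟩ := exists_lowerDensity_preimage_mul_add_le D he
    exact (domRatio_le_lowerDensity (hD.preimage_mul_add hdvd r)).trans hr
  · refine le_domRatio fun D hD => ?_
    exact (domRatio_le_lowerDensity (hD.preimage_ediv hd.ne')).trans
      (lowerDensity_preimage_ediv_le D he)

theorem stmt_11 (S : Set ℤ) (hS : 0 ∉ S) (d : ℤ) (hd : 0 < d)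
    (hdvd : ∀ s ∈ S, d ∣ s) :
    domRatio {x : ℤ | d * x ∈ S} = domRatio S :=
  stmt_11_general S d hd hdvd
end

section
/- If S ⊆ ℤ \ {0} is nonempty, then γ̄(ℤ, S) ≤ 1/2. -/
/-!
Fix `s ∈ S` and cut `ℤ` into the blocks of length `|s|` on which `m / s` is constant; let `D`
be the union of the blocks with even index. Translation by `s` moves each block to the next one,
so it maps `D` into its complement and the complement into `D`. The second fact makes `D`
dominating; the first shows that `D ∩ [-n, n]` and its translate are disjoint subsets of
`[-n - |s|, n + |s|]`, so `D` has at most `n + |s|` points in `[-n, n]` and density `≤ 1/2`.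
-/

open Filter Topology

lemma card_filter_Icc_le_of_add_notMem {D : Set ℤ} [DecidablePred (· ∈ D)] {s : ℤ}
    (hD : ∀ m ∈ D, m + s ∉ D) (n : ℕ) :
    ((Finset.Icc (-(n:ℤ)) n).filter (· ∈ D)).card ≤ n + s.natAbs := by
  set A := (Finset.Icc (-(n:ℤ)) n).filter (· ∈ D)
  set N : ℤ := n + s.natAbs
  have hdisj : Disjoint A (A.map (addRightEmbedding s)) := by
    simp only [Finset.disjoint_left, Finset.mem_map, addRightEmbedding_apply, not_exists,
      not_and, A, Finset.mem_filter]
    rintro m ⟨-, hm⟩ k ⟨-, hk⟩ rfl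
    exact hD k hk hm
  have hsub : A ∪ A.map (addRightEmbedding s) ⊆ Finset.Icc (-N) N := by
    intro m
    simp only [Finset.mem_union, Finset.mem_map, addRightEmbedding_apply, A,
      Finset.mem_filter, Finset.mem_Icc, N]
    rintro (⟨⟨h₁, h₂⟩, -⟩ | ⟨k, ⟨⟨h₁, h₂⟩, -⟩, rfl⟩) <;> omega
  have h := Finset.card_le_card hsub
  rw [Finset.card_union_of_disjoint hdisj, Finset.card_map, Int.card_Icc] at h
  omega

lemma tendsto_add_const_div_two_mul_add_one (c : ℝ) :
    Tendsto (fun n : ℕ => (n + c) / (2 * n + 1)) atTop (𝓝 (1 / 2)) := by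
  have hden : Tendsto (fun n : ℕ => 2 * (n : ℝ) + 1) atTop atTop :=
    tendsto_atTop_add_const_right _ 1
      (tendsto_natCast_atTop_atTop.const_mul_atTop two_pos)
  have hsplit : (fun n : ℕ => (n + c) / (2 * n + 1)) =
      fun n : ℕ => 1 / 2 + (c - 1 / 2) / (2 * n + 1) := by
    funext n
    field_simp
    ring
  rw [hsplit]
  simpa using tendsto_const_nhds.add ((tendsto_const_nhds (x := c - 1 / 2)).div_atTop hden)

open scoped Classical in
lemma lowerDensity_le_half_of_card_le {U : Set ℤ} (c : ℝ)
    (hU : ∀ n : ℕ, (((Finset.Icc (-(n:ℤ)) n).filter (· ∈ U)).card : ℝ) ≤ n + c) :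
    lowerDensity U ≤ 1 / 2 := by
  have hlim := tendsto_add_const_div_two_mul_add_one c
  rw [← hlim.liminf_eq]
  refine liminf_le_liminf (Eventually.of_forall fun n => ?_)
    (isBoundedUnder_of ⟨0, fun n => by positivity⟩) hlim.isCoboundedUnder_ge
  exact div_le_div_of_nonneg_right (hU n) (by positivity)

lemma domRatio_le_of_isDominating {S D : Set ℤ} {x : ℝ} (hD : IsDominating S D) (hx : 0 ≤ x)
    (hDx : lowerDensity D ≤ x) : domRatio S ≤ x := by
  by_cases hbdd : BddBelow {x : ℝ | ∃ D : Set ℤ, IsDominating S D ∧ x = lowerDensity D}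
  · exact csInf_le_of_le hbdd ⟨D, hD, rfl⟩ hDx
  · -- `sInf` of a set of reals that is not bounded below is `0`.
    rwa [domRatio, Real.sInf_of_not_bddBelow hbdd]

def evenBlocks (s : ℤ) : Set ℤ := {m | Even (m / s)}

lemma add_mem_evenBlocks_iff {s : ℤ} (hs : s ≠ 0) (m : ℤ) :
    m + s ∈ evenBlocks s ↔ m ∉ evenBlocks s := by
  have hdiv : (m + s) / s = m / s + 1 := by simpa using Int.add_mul_ediv_right m 1 hs
  change Even ((m + s) / s) ↔ ¬Even (m / s)
  rw [hdiv, Int.even_add_one]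

lemma isDominating_evenBlocks {S : Set ℤ} {s : ℤ} (hsS : s ∈ S) (hs : s ≠ 0) :
    IsDominating S (evenBlocks s) := by
  intro v
  by_cases hv : v ∈ evenBlocks s
  · exact Or.inl hv
  · refine Or.inr ⟨v - s, ?_, s, hsS, by ring⟩
    by_contra h
    exact hv (by simpa using (add_mem_evenBlocks_iff hs (v - s)).2 h)

theorem stmt_12 (S : Set ℤ) (hS : 0 ∉ S) (hne : S.Nonempty) :
    domRatio S ≤ 1/2 := by
  classical
  obtain ⟨s, hsS⟩ := hne
  have hs : s ≠ 0 := fun h => hS (h ▸ hsS)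
  refine domRatio_le_of_isDominating (isDominating_evenBlocks hsS hs) (by norm_num) ?_
  refine lowerDensity_le_half_of_card_le s.natAbs fun n => ?_
  exact_mod_cast card_filter_Icc_le_of_add_notMem
    (fun m hm => (add_mem_evenBlocks_iff hs m).not_left.2 hm) n
end

section
/- For any nonzero integer s, the domination ratio of the undirected integer distance graph Γ(ℤ, {s, -s}) equals 1/3. -/
open Filter
open scoped Topology

/-! ### Auxiliary lemmas -/

open scoped Classical

section aux

lemma tendsto_aux (c : ℝ) :
    Tendsto (fun n : ℕ => (2*(n:ℝ)+1+c)/(3*(2*(n:ℝ)+1))) atTop (𝓝 (1/3)) := by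
  have h1 : Tendsto (fun n : ℕ => 2*(n:ℝ)+1) atTop atTop := by
    apply tendsto_atTop_add_const_right
    exact tendsto_natCast_atTop_atTop.const_mul_atTop two_pos
  have key : ∀ n : ℕ, (2*(n:ℝ)+1+c)/(3*(2*(n:ℝ)+1)) = 1/3 + (c/3)/(2*(n:ℝ)+1) := by
    intro n
    have hn : (2*(n:ℝ)+1) ≠ 0 := by positivity
    field_simp
  simp only [key]
  have := tendsto_const_nhds (x := (1/3 : ℝ)) (f := atTop (α := ℕ)) |>.add
    (Tendsto.div_atTop (tendsto_const_nhds (x := (c/3 : ℝ))) h1)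
  simpa using this

lemma le_liminf_aux {f u : ℕ → ℝ} (hu : Tendsto u atTop (𝓝 (1/3)))
    (h : ∀ᶠ n in atTop, u n ≤ f n) (hb : ∀ᶠ n in atTop, f n ≤ 1) :
    1/3 ≤ liminf f atTop := by
  calc (1/3 : ℝ) = liminf u atTop := hu.liminf_eq.symm
    _ ≤ liminf f atTop :=
      liminf_le_liminf h hu.isBoundedUnder_ge
        (isCoboundedUnder_ge_of_eventually_le _ hb)

lemma liminf_le_aux {f v : ℕ → ℝ} (hv : Tendsto v atTop (𝓝 (1/3)))
    (h : ∀ᶠ n in atTop, f n ≤ v n) (hb : ∀ n, 0 ≤ f n) :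
    liminf f atTop ≤ 1/3 := by
  calc liminf f atTop
      ≤ liminf v atTop :=
        liminf_le_liminf h (isBoundedUnder_of ⟨0, fun n => hb n⟩)
          hv.isBoundedUnder_le.isCoboundedUnder_ge
    _ = 1/3 := hv.liminf_eq

/-- Count of a set in the centered window. -/
noncomputable def cnt (D : Set ℤ) (n : ℕ) : ℕ :=
  ((Finset.Icc (-(n:ℤ)) (n:ℤ)).filter (fun m => m ∈ D)).card

lemma cnt_le (D : Set ℤ) (n : ℕ) : (cnt D n : ℝ) ≤ 2*(n:ℝ)+1 := by
  have h1 : cnt D n ≤ (Finset.Icc (-(n:ℤ)) (n:ℤ)).card := Finset.card_filter_le _ _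
  have h2 : (Finset.Icc (-(n:ℤ)) (n:ℤ)).card = 2*n+1 := by
    rw [Int.card_Icc]
    omega
  have : (cnt D n : ℝ) ≤ ((2*n+1 : ℕ) : ℝ) := by exact_mod_cast h1.trans_eq h2
  push_cast at this
  linarith

lemma lowerDensity_eq_liminf_s13 (D : Set ℤ) :
    lowerDensity D = liminf (fun n : ℕ => (cnt D n : ℝ) / (2*(n:ℝ)+1)) atTop := rfl

/-- Key lower bound: any dominating set has many elements in a window. -/
lemma dom_count (s : ℤ) (hs : 0 < s) (D : Set ℤ) (hD : IsDominating {s, -s} D)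
    (n : ℕ) (hn : s ≤ (n:ℤ)) :
    2*(n:ℤ)+1-2*s ≤ 3 * (cnt D n) := by
  -- the window [-(n-s), n-s] is covered by triples around elements of D ∩ [-n,n]
  set N : ℤ := (n:ℤ) - s with hN
  have hsub : Finset.Icc (-N) N ⊆
      ((Finset.Icc (-(n:ℤ)) (n:ℤ)).filter (fun m => m ∈ D)).biUnion
        (fun u => {u, u+s, u-s}) := by
    intro v hv
    simp only [Finset.mem_Icc] at hv
    rcases hD v with hvD | ⟨u, huD, t, ht, hvt⟩
    · refine Finset.mem_biUnion.2 ⟨v, ?_, ?_⟩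
      · simp only [Finset.mem_filter, Finset.mem_Icc]
        refine ⟨⟨by omega, by omega⟩, hvD⟩
      · simp
    · rcases ht with rfl | ht
      · refine Finset.mem_biUnion.2 ⟨u, ?_, ?_⟩
        · simp only [Finset.mem_filter, Finset.mem_Icc]
          refine ⟨⟨by omega, by omega⟩, huD⟩
        · simp [hvt]
      · simp only [Set.mem_singleton_iff] at ht
        subst ht
        refine Finset.mem_biUnion.2 ⟨u, ?_, ?_⟩
        · simp only [Finset.mem_filter, Finset.mem_Icc]
          refine ⟨⟨by omega, by omega⟩, huD⟩
        · simp only [Finset.mem_insert, Finset.mem_singleton]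
          right; right; omega
  have hcard : (Finset.Icc (-N) N).card ≤ 3 * (cnt D n) := by
    calc (Finset.Icc (-N) N).card
        ≤ _ := Finset.card_le_card hsub
      _ ≤ _ := Finset.card_biUnion_le
      _ ≤ (cnt D n) * 3 := by
          apply Finset.sum_le_card_nsmul
          intro u _
          calc ({u, u+s, u-s} : Finset ℤ).card
              ≤ ({u+s, u-s} : Finset ℤ).card + 1 := Finset.card_insert_le _ _
            _ ≤ ({u-s} : Finset ℤ).card + 1 + 1 := by
                have := Finset.card_insert_le (u+s) ({u-s} : Finset ℤ)
                omega
            _ ≤ 3 := by simp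
      _ = 3 * (cnt D n) := by ring
  have hIcc : (Finset.Icc (-N) N).card = (2*N+1).toNat := by
    rw [Int.card_Icc]; congr 1; ring_nf
  have h2 : ((2*N+1).toNat : ℤ) ≤ 3 * (cnt D n) := by
    rw [← hIcc]; exact_mod_cast hcard
  omega

/-- The standard dominating set for step `s > 0`. -/
def stdD (s : ℤ) : Set ℤ := {m : ℤ | (m / s) % 3 = 0}

lemma stdD_dom (s : ℤ) (hs : 0 < s) : IsDominating {s, -s} (stdD s) := by
  intro v
  have hq := Int.emod_emod_of_dvd (v / s) (dvd_refl 3)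
  have h3 : (v / s) % 3 = 0 ∨ (v / s) % 3 = 1 ∨ (v / s) % 3 = 2 := by omega
  have hdiv : ∀ w : ℤ, (w + s) / s = w / s + 1 := by
    intro w
    have := Int.add_mul_ediv_right w 1 (by omega : s ≠ 0)
    simpa using this
  rcases h3 with h | h | h
  · exact Or.inl h
  · -- v = (v - s) + s
    refine Or.inr ⟨v - s, ?_, s, Or.inl rfl, by ring⟩
    show ((v - s) / s) % 3 = 0
    have h1 : (v - s + s) / s = (v - s)/s + 1 := hdiv (v - s)
    rw [show v - s + s = v from by ring] at h1
    omega
  · refine Or.inr ⟨v + s, ?_, -s, Or.inr rfl, by ring⟩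
    show ((v + s) / s) % 3 = 0
    rw [hdiv]
    omega

lemma stdD_count (s : ℤ) (hs : 0 < s) (n : ℕ) :
    3 * (cnt (stdD s) n : ℤ) ≤ 2*(n:ℤ)+1 + (2*s+4) := by
  set ψ : ℤ → ℤ := fun m => s * (m / s / 3) + m % s with hψ
  have hkey : ∀ m : ℤ, m ∈ stdD s → 3 * ψ m = m + 2 * (m % s) := by
    intro m hm
    have h1 : s * (m / s) + m % s = m := Int.mul_ediv_add_emod m s
    have h2 : (m / s) % 3 = 0 := hm
    have h3 : m / s = 3 * (m / s / 3) := by omega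
    calc 3 * ψ m = 3 * (s * (m / s / 3)) + 3 * (m % s) := by rw [hψ]; ring
      _ = s * (3 * (m / s / 3)) + 3 * (m % s) := by ring
      _ = s * (m / s) + 3 * (m % s) := by rw [← h3]
      _ = m + 2 * (m % s) := by omega
  have hmod : ∀ m : ℤ, ψ m % s = m % s := by
    intro m
    have h0 : 0 ≤ m % s := Int.emod_nonneg m (by omega)
    have h1 : m % s < s := Int.emod_lt_of_pos m hs
    have : ψ m = m % s + s * (m / s / 3) := by rw [hψ]; ring
    rw [this, Int.add_mul_emod_self_left, Int.emod_eq_of_lt h0 h1]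
  set T : Finset ℤ := Finset.Icc ((-(n:ℤ))/3) (((n:ℤ)+2*s)/3) with hT
  have hinj : Set.InjOn ψ ((Finset.Icc (-(n:ℤ)) (n:ℤ)).filter (fun m => m ∈ stdD s)) := by
    intro a ha b hb hab
    simp only [Finset.coe_filter, Set.mem_setOf_eq] at ha hb
    have h1 : 3 * ψ a = a + 2 * (a % s) := hkey a ha.2
    have h2 : 3 * ψ b = b + 2 * (b % s) := hkey b hb.2
    have h3 : a % s = ψ a % s := (hmod a).symm
    have h4 : b % s = ψ b % s := (hmod b).symm
    rw [hab] at h1 h3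
    omega
  have hmaps : ∀ m ∈ (Finset.Icc (-(n:ℤ)) (n:ℤ)).filter (fun m => m ∈ stdD s), ψ m ∈ T := by
    intro m hm
    simp only [Finset.mem_filter, Finset.mem_Icc] at hm
    have h1 : 3 * ψ m = m + 2 * (m % s) := hkey m hm.2
    have h0 : 0 ≤ m % s := Int.emod_nonneg m (by omega)
    have hlt : m % s < s := Int.emod_lt_of_pos m hs
    simp only [hT, Finset.mem_Icc]
    omega
  have hcard : cnt (stdD s) n ≤ T.card := Finset.card_le_card_of_injOn ψ hmaps hinj
  have hTcard : (T.card : ℤ) = ((((n:ℤ)+2*s)/3) + 1 - ((-(n:ℤ))/3)).toNat := by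
    rw [hT, Int.card_Icc]
  have hTbound : 3 * (T.card : ℤ) ≤ 2*(n:ℤ)+1 + (2*s+4) := by
    rw [hTcard]
    omega
  have : (cnt (stdD s) n : ℤ) ≤ (T.card : ℤ) := by exact_mod_cast hcard
  omega

/-- Lower bound 1/3 for the density of any dominating set (with positive step). -/
lemma third_le_density (s : ℤ) (hs : 0 < s) (D : Set ℤ) (hD : IsDominating {s, -s} D) :
    1/3 ≤ lowerDensity D := by
  rw [lowerDensity_eq_liminf_s13]
  apply le_liminf_aux (u := fun n : ℕ => (2*(n:ℝ)+1+(-(2*(s:ℝ))))/(3*(2*(n:ℝ)+1)))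
    (tendsto_aux _)
  · filter_upwards [eventually_ge_atTop s.toNat] with n hn
    have hsn : s ≤ (n:ℤ) := by omega
    have hb := dom_count s hs D hD n hsn
    have hb' : 2*(n:ℝ)+1-2*(s:ℝ) ≤ 3 * (cnt D n : ℝ) := by exact_mod_cast hb
    have hpos : (0:ℝ) < 2*(n:ℝ)+1 := by positivity
    rw [div_le_div_iff₀ (by positivity) hpos]
    nlinarith [Nat.cast_nonneg (α := ℝ) (cnt D n)]
  · filter_upwards with n
    have := cnt_le D n
    have hpos : (0:ℝ) < 2*(n:ℝ)+1 := by positivity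
    rw [div_le_one hpos]
    exact this

lemma density_stdD_le (s : ℤ) (hs : 0 < s) : lowerDensity (stdD s) ≤ 1/3 := by
  rw [lowerDensity_eq_liminf_s13]
  apply liminf_le_aux (v := fun n : ℕ => (2*(n:ℝ)+1+(2*(s:ℝ)+4))/(3*(2*(n:ℝ)+1)))
    (tendsto_aux _)
  · filter_upwards with n
    have hb := stdD_count s hs n
    have hb' : 3 * (cnt (stdD s) n : ℝ) ≤ 2*(n:ℝ)+1+(2*(s:ℝ)+4) := by exact_mod_cast hb
    have hpos : (0:ℝ) < 2*(n:ℝ)+1 := by positivity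
    rw [div_le_div_iff₀ hpos (by positivity)]
    nlinarith
  · intro n
    positivity

lemma main_pos (s : ℤ) (hs : 0 < s) : domRatio {s, -s} = 1/3 := by
  have hdom := stdD_dom s hs
  have hlb : ∀ x ∈ {x : ℝ | ∃ D : Set ℤ, IsDominating {s, -s} D ∧ x = lowerDensity D},
      1/3 ≤ x := by
    rintro x ⟨D, hD, rfl⟩
    exact third_le_density s hs D hD
  have hval : lowerDensity (stdD s) = 1/3 :=
    le_antisymm (density_stdD_le s hs) (third_le_density s hs _ hdom)
  have hmem : (1/3 : ℝ) ∈ {x : ℝ | ∃ D : Set ℤ, IsDominating {s, -s} D ∧ x = lowerDensity D} :=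
    ⟨stdD s, hdom, hval.symm⟩
  refine le_antisymm (csInf_le ⟨1/3, hlb⟩ hmem) (le_csInf ⟨_, hmem⟩ hlb)

end aux

theorem stmt_13 (s : ℤ) (hs : s ≠ 0) :
    domRatio {s, -s} = 1/3 := by
  rcases lt_or_gt_of_ne hs with h | h
  · have : ({s, -s} : Set ℤ) = {-s, -(-s)} := by
      rw [neg_neg, Set.pair_comm]
    rw [this]
    exact main_pos (-s) (by omega)
  · exact main_pos s h
end

section
/- Let D = {x_i : i ∈ ℤ} (with x_i < x_{i+1}) be a dominating set of Γ(ℤ, {1, s}) for s ∈ ℤ \ {0,1}, and let b_i = x_{i+1} - x_i. If b_i ≥ 3, then D contains the b_i - 2 integers x_i - s + 2, x_i - s + 3, …, x_i - s + b_i - 1; consequently b_i ≤ s+1 if s > 0 and b_i ≤ -s+2 if s < 0. -/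
open Filter

theorem stmt_19 (s : ℤ) (hs0 : s ≠ 0) (hs1 : s ≠ 1)
    (x : ℤ → ℤ) (hmono : ∀ i : ℤ, x i < x (i + 1))
    (D : Set ℤ) (hD : D = Set.range x) (hdom : IsDominating {1, s} D)
    (i : ℤ) (hb : 3 ≤ x (i + 1) - x i) :
    (∀ j : ℤ, 2 ≤ j → j ≤ x (i + 1) - x i - 1 → x i - s + j ∈ D) ∧
    (0 < s → x (i + 1) - x i ≤ s + 1) ∧
    (s < 0 → x (i + 1) - x i ≤ -s + 2) := by
  have hsm : StrictMono x := strictMono_int_of_lt_succ hmono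
  have hgap : ∀ v : ℤ, x i < v → v < x (i + 1) → v ∉ D := by
    intro v h1 h2 hv
    rw [hD] at hv
    obtain ⟨j, rfl⟩ := hv
    rcases lt_or_ge i j with h | h
    · exact absurd (hsm.monotone (by omega : i + 1 ≤ j)) (by omega)
    · exact absurd (hsm.monotone h) (by omega)
  have hdom' : ∀ v : ℤ, v ∈ D ∨ (v - 1) ∈ D ∨ (v - s) ∈ D := by
    intro v
    rcases hdom v with h | ⟨u, hu, t, ht, rfl⟩
    · exact Or.inl h
    · simp only [Set.mem_insert_iff, Set.mem_singleton_iff] at ht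
      rcases ht with rfl | rfl
      · exact Or.inr (Or.inl (by simpa using hu))
      · exact Or.inr (Or.inr (by simpa using hu))
  have key : ∀ j : ℤ, 2 ≤ j → j ≤ x (i + 1) - x i - 1 → x i - s + j ∈ D := by
    intro j h2 h3
    have hv : (x i + j) ∉ D := hgap _ (by omega) (by omega)
    have hv1 : (x i + j - 1) ∉ D := hgap _ (by omega) (by omega)
    rcases hdom' (x i + j) with h | h | h
    · exact absurd h hv
    · exact absurd h hv1
    · have he : x i - s + j = x i + j - s := by ring
      rw [he]; exact h
  refine ⟨key, ?_, ?_⟩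
  · intro hspos
    by_contra hcon
    push_neg at hcon
    have hs2 : 2 ≤ s := by omega
    have := key (s + 1) (by omega) (by omega)
    have he : x i - s + (s + 1) = x i + 1 := by ring
    rw [he] at this
    exact hgap (x i + 1) (by omega) (by omega) this
  · intro hsneg
    by_contra hcon
    push_neg at hcon
    have := key 2 le_rfl (by omega)
    exact hgap (x i - s + 2) (by omega) (by omega) this
end
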